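/- Let l : 2^V → ℝ_{≥0} be monotone submodular with l(∅) = 0. Suppose S_g and a one-extension S_g⁺ = S_g ∪ {s} satisfy l(S_g⁺) ≥ (1 - e^{-C/B}) · OPT for constants 0 < C ≤ B and OPT ≥ 0, and let v* maximize l({v}) over v ∈ V. Then max{l(S_g), l({v*})} ≥ ((1 - e^{-C/B})/2) · OPT. -/
import Mathlib


def Submodular {V : Type*} [DecidableEq V] (q : Finset V → ℝ) : Prop :=
  ∀ A B : Finset V, A ⊆ B → ∀ v ∉ B,
    q (A ∪ {v}) - q A ≥ q (B ∪ {v}) - q B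

def SetMonotone {V : Type*} [DecidableEq V] (q : Finset V → ℝ) : Prop :=
  ∀ A : Finset V, ∀ v : V, q (A ∪ {v}) ≥ q A

theorem stmt_10 {V : Type*} [DecidableEq V]
    (l : Finset V → ℝ) (hl : ∀ S, 0 ≤ l S)
    (hmono : SetMonotone l) (hsub : Submodular l) (hempty : l ∅ = 0)
    (C B OPT : ℝ) (hC : 0 < C) (hCB : C ≤ B) (hOPT : 0 ≤ OPT)
    (Sg : Finset V) (s : V)
    (hplus : l (Sg ∪ {s}) ≥ (1 - Real.exp (-(C / B))) * OPT)
    (vstar : V) (hvstar : ∀ v : V, l {v} ≤ l {vstar}) :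
    max (l Sg) (l {vstar}) ≥ ((1 - Real.exp (-(C / B))) / 2) * OPT := by
  have key : l Sg + l {vstar} ≥ (1 - Real.exp (-(C / B))) * OPT := by
    by_cases hs : s ∈ Sg
    · have : Sg ∪ {s} = Sg := by
        ext x; simp [Finset.mem_union]
        intro h; rw [h]; exact hs
      rw [this] at hplus
      have := hl {vstar}
      linarith
    · have h1 := hsub ∅ Sg (Finset.empty_subset _) s hs
      have h2 := hvstar s
      have : (∅ ∪ {s} : Finset V) = {s} := by simp
      rw [this, hempty] at h1
      linarith
  have h := le_max_left (l Sg) (l {vstar})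
  have h2 := le_max_right (l Sg) (l {vstar})
  linarith
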